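/- Conditional regret bound for Ψ(t) = 1 − t with arbitrary costs (key inequality in the proof of Theorem 4.3): let Ψ(t) = 1 − t. Then for every score vector h ∈ ℝ^{Ȳ}, every choice of costs c ∈ [0,1]^{[n]}, and every maximizer k(h) of h, ΔC_Ψ(h) ≥ ΔC_def(h)/(n+1). -/
import Mathlib


open Real

/-- Softmax of a score vector. -/
noncomputable def smax {m : ℕ} (v : Fin m → ℝ) (y : Fin m) : ℝ :=
  Real.exp (v y) / ∑ y' : Fin m, Real.exp (v y')

/-- Conditional RL2D error `C_Ψ(h) = Σ_y [ q_y Ψ(s_y) + (p_y − q_y) Ψ(s_y + s_{n+1}) ]`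
with `q_y = p_y c_y`; label `Fin.last n` is the deferral label. -/
noncomputable def condC {n : ℕ} (Ψ : ℝ → ℝ) (p c : Fin n → ℝ) (v : Fin (n + 1) → ℝ) : ℝ :=
  ∑ y : Fin n, (p y * c y * Ψ (smax v y.castSucc)
    + (p y - p y * c y) * Ψ (smax v y.castSucc + smax v (Fin.last n)))

/-- Conditional regret `ΔC_Ψ(h) = C_Ψ(h) − inf_{h'} C_Ψ(h')`. -/
noncomputable def condRegret {n : ℕ} (Ψ : ℝ → ℝ) (p c : Fin n → ℝ)
    (v : Fin (n + 1) → ℝ) : ℝ :=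
  condC Ψ p c v - ⨅ v' : Fin (n + 1) → ℝ, condC Ψ p c v'

/-- `P(k)`: `p_k` for `k ∈ [n]` and `p_{n+1} = Σ_y p_y (1 − c_y)` for the deferral label. -/
noncomputable def Pfull {n : ℕ} (p c : Fin n → ℝ) (k : Fin (n + 1)) : ℝ :=
  if h : k = Fin.last n then ∑ y : Fin n, p y * (1 - c y) else p (k.castPred h)

/-- Conditional deferral regret `ΔC_def = max{max_y p_y, p_{n+1}} − P(k)`. -/
noncomputable def defRegret {n : ℕ} (p c : Fin n → ℝ) (k : Fin (n + 1)) : ℝ :=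
  max (⨆ y : Fin n, p y) (∑ y : Fin n, p y * (1 - c y)) - Pfull p c k

-- smax lemmas
lemma sumexp_pos {m : ℕ} [NeZero m] (v : Fin m → ℝ) : 0 < ∑ y' : Fin m, Real.exp (v y') :=
  Finset.sum_pos (fun y _ => Real.exp_pos _) ⟨⟨0, Nat.pos_of_ne_zero (NeZero.ne m)⟩, Finset.mem_univ _⟩

lemma smax_pos {m : ℕ} [NeZero m] (v : Fin m → ℝ) (y : Fin m) : 0 < smax v y :=
  div_pos (Real.exp_pos _) (sumexp_pos v)

lemma smax_sum {m : ℕ} [NeZero m] (v : Fin m → ℝ) : ∑ y : Fin m, smax v y = 1 := by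
  unfold smax
  rw [← Finset.sum_div, div_self (sumexp_pos v).ne']

lemma smax_le_one {m : ℕ} [NeZero m] (v : Fin m → ℝ) (y : Fin m) : smax v y ≤ 1 := by
  rw [← smax_sum v]
  exact Finset.single_le_sum (fun j _ => (smax_pos v j).le) (Finset.mem_univ y)

lemma smax_ge {m : ℕ} [NeZero m] (v : Fin m → ℝ) (k : Fin m) (hk : ∀ j, v j ≤ v k) :
    1 / m ≤ smax v k := by
  have h1 : ∑ y' : Fin m, Real.exp (v y') ≤ m * Real.exp (v k) := by
    calc ∑ y' : Fin m, Real.exp (v y') ≤ ∑ _y' : Fin m, Real.exp (v k) :=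
      Finset.sum_le_sum (fun j _ => Real.exp_le_exp.2 (hk j))
    _ = m * Real.exp (v k) := by simp [mul_comm]
  have hm : (0:ℝ) < m := by exact_mod_cast Nat.pos_of_ne_zero (NeZero.ne m)
  unfold smax
  rw [div_le_div_iff₀ hm (sumexp_pos v)]
  calc 1 * ∑ y' : Fin m, Real.exp (v y') ≤ m * Real.exp (v k) := by simpa using h1
  _ = Real.exp (v k) * m := mul_comm _ _

-- Pfull lemmas
lemma Pfull_castSucc {n : ℕ} (p c : Fin n → ℝ) (y : Fin n) :
    Pfull p c y.castSucc = p y := by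
  rw [Pfull, dif_neg (Fin.castSucc_lt_last y).ne]
  simp

lemma Pfull_last {n : ℕ} (p c : Fin n → ℝ) :
    Pfull p c (Fin.last n) = ∑ y : Fin n, p y * (1 - c y) := by
  rw [Pfull, dif_pos rfl]

lemma Pfull_nonneg {n : ℕ} (p c : Fin n → ℝ) (hp0 : ∀ y, 0 ≤ p y)
    (hc : ∀ y, c y ∈ Set.Icc (0 : ℝ) 1) (j : Fin (n + 1)) : 0 ≤ Pfull p c j := by
  rw [Pfull]
  split
  · exact Finset.sum_nonneg fun y _ => mul_nonneg (hp0 y) (by linarith [(hc y).2])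
  · exact hp0 _

lemma condC_eq {n : ℕ} (p c : Fin n → ℝ) (hp1 : ∑ y : Fin n, p y = 1)
    (v : Fin (n + 1) → ℝ) :
    condC (fun t => 1 - t) p c v = 1 - ∑ k : Fin (n + 1), Pfull p c k * smax v k := by
  have key : condC (fun t => 1 - t) p c v =
      (∑ y : Fin n, p y) - ((∑ x : Fin n, p x * smax v x.castSucc)
        + (∑ y : Fin n, p y * (1 - c y)) * smax v (Fin.last n)) := by
    rw [condC, Finset.sum_mul, ← Finset.sum_add_distrib, ← Finset.sum_sub_distrib]
    exact Finset.sum_congr rfl fun y _ => by ring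
  rw [key, hp1, Fin.sum_univ_castSucc]
  simp only [Pfull_castSucc, Pfull_last]

section Main
variable {n : ℕ} (hn : 0 < n) (p c : Fin n → ℝ)

-- the max value M is attained by some Pfull k and dominates all Pfull j
lemma exists_Pfull_max (hn : 0 < n) (p c : Fin n → ℝ) :
    ∃ k : Fin (n + 1),
      Pfull p c k = max (⨆ y : Fin n, p y) (∑ y : Fin n, p y * (1 - c y)) ∧
      ∀ j, Pfull p c j ≤ Pfull p c k := by
  haveI : Nonempty (Fin n) := ⟨⟨0, hn⟩⟩
  obtain ⟨y0, hy0⟩ := Finite.exists_max p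
  have hsup : (⨆ y : Fin n, p y) = p y0 :=
    le_antisymm (ciSup_le hy0) (le_ciSup (Set.Finite.bddAbove (Set.finite_range p)) y0)
  have hdom : ∀ j : Fin (n + 1), Pfull p c j ≤ max (p y0) (∑ y : Fin n, p y * (1 - c y)) := by
    intro j
    rw [Pfull]
    split
    · exact le_max_right _ _
    · exact le_trans (hy0 _) (le_max_left _ _)
  rcases le_total (∑ y : Fin n, p y * (1 - c y)) (p y0) with h | h
  · refine ⟨y0.castSucc, ?_, ?_⟩
    · rw [Pfull_castSucc, hsup, max_eq_left h]
    · intro j; rw [Pfull_castSucc, ← max_eq_left h]; exact hdom j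
  · refine ⟨Fin.last n, ?_, ?_⟩
    · rw [Pfull_last, hsup, max_eq_right h]
    · intro j; rw [Pfull_last, ← max_eq_right h]; exact hdom j

lemma Pfull_le_one {n : ℕ} (p c : Fin n → ℝ) (hp0 : ∀ y, 0 ≤ p y)
    (hp1 : ∑ y : Fin n, p y = 1) (hc : ∀ y, c y ∈ Set.Icc (0 : ℝ) 1) (j : Fin (n + 1)) :
    Pfull p c j ≤ 1 := by
  rw [Pfull]
  split
  · rw [← hp1]
    exact Finset.sum_le_sum fun y _ =>
      mul_le_of_le_one_right (hp0 y) (by linarith [(hc y).1])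
  · rw [← hp1]
    exact Finset.single_le_sum (fun y _ => hp0 y) (Finset.mem_univ _)

lemma bdd_below_condC {n : ℕ} (p c : Fin n → ℝ) (hp0 : ∀ y, 0 ≤ p y)
    (hp1 : ∑ y : Fin n, p y = 1) (hc : ∀ y, c y ∈ Set.Icc (0 : ℝ) 1) :
    BddBelow (Set.range fun v' : Fin (n + 1) → ℝ => condC (fun t => 1 - t) p c v') := by
  refine ⟨1 - ∑ j : Fin (n + 1), Pfull p c j, ?_⟩
  rintro x ⟨v', rfl⟩
  show 1 - ∑ j : Fin (n + 1), Pfull p c j ≤ condC (fun t => 1 - t) p c v'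
  rw [condC_eq p c hp1]
  have : ∑ j : Fin (n + 1), Pfull p c j * smax v' j ≤ ∑ j : Fin (n + 1), Pfull p c j :=
    Finset.sum_le_sum fun j _ =>
      mul_le_of_le_one_right (Pfull_nonneg p c hp0 hc j) (smax_le_one v' j)
  linarith

lemma iInf_condC_le {n : ℕ} (hn : 0 < n) (p c : Fin n → ℝ) (hp0 : ∀ y, 0 ≤ p y)
    (hp1 : ∑ y : Fin n, p y = 1) (hc : ∀ y, c y ∈ Set.Icc (0 : ℝ) 1) :
    (⨅ v' : Fin (n + 1) → ℝ, condC (fun t => 1 - t) p c v') ≤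
      1 - max (⨆ y : Fin n, p y) (∑ y : Fin n, p y * (1 - c y)) := by
  obtain ⟨k₀, hk₀, hdom⟩ := exists_Pfull_max hn p c
  rw [← hk₀]
  set M := Pfull p c k₀ with hM
  have hM1 : M ≤ 1 := Pfull_le_one p c hp0 hp1 hc k₀
  have hstep : ∀ ε : ℝ, 0 < ε →
      (⨅ v' : Fin (n + 1) → ℝ, condC (fun t => 1 - t) p c v') ≤ 1 - M + ε := by
    intro ε hε
    set t : ℝ := (n : ℝ) / ε + 1 with ht
    set v' : Fin (n + 1) → ℝ := fun j => if j = k₀ then t else 0 with hv'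
    have hsum : ∑ j : Fin (n + 1), Real.exp (v' j) = Real.exp t + n := by
      have : ∀ j : Fin (n + 1), Real.exp (v' j)
          = (if j = k₀ then Real.exp t - 1 else 0) + 1 := by
        intro j
        by_cases h : j = k₀ <;> simp [hv', h]
      rw [Finset.sum_congr rfl fun j _ => this j, Finset.sum_add_distrib,
        Finset.sum_ite_eq' Finset.univ k₀ (fun _ => Real.exp t - 1)]
      simp
    have hexp : (n : ℝ) / ε < Real.exp t := by
      have := Real.add_one_le_exp ((n : ℝ) / ε)
      calc (n : ℝ) / ε < (n : ℝ) / ε + 1 := by linarith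
      _ ≤ Real.exp ((n : ℝ) / ε + 1) := Real.add_one_le_exp _ |>.trans
          (Real.exp_le_exp.2 (by linarith))
      _ = Real.exp t := rfl
    have hexp_pos : (0:ℝ) < Real.exp t := Real.exp_pos t
    have hs : 1 - ε ≤ smax v' k₀ := by
      have hsk : smax v' k₀ = Real.exp t / (Real.exp t + n) := by
        rw [smax, hsum, hv']; simp
      rw [hsk]
      have hden : (0:ℝ) < Real.exp t + n := by positivity
      rw [le_div_iff₀ hden]
      have hne : (n : ℝ) / Real.exp t < ε := by
        rw [div_lt_iff₀ hexp_pos]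
        calc (n:ℝ) = (n : ℝ) / ε * ε := by field_simp
        _ < Real.exp t * ε := by
            exact mul_lt_mul_of_pos_right hexp hε
        _ = ε * Real.exp t := mul_comm _ _
      have h2 : (n:ℝ) < ε * Real.exp t := (div_lt_iff₀ hexp_pos).1 hne
      have h3 : (0:ℝ) ≤ ε * n := mul_nonneg hε.le (Nat.cast_nonneg n)
      nlinarith
    have hcond : condC (fun t => 1 - t) p c v' ≤ 1 - M + ε := by
      rw [condC_eq p c hp1]
      have hsingle : M * smax v' k₀ ≤ ∑ j : Fin (n + 1), Pfull p c j * smax v' j :=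
        Finset.single_le_sum
          (fun j _ => mul_nonneg (Pfull_nonneg p c hp0 hc j) (smax_pos v' j).le)
          (Finset.mem_univ k₀)
      have hs1 : smax v' k₀ ≤ 1 := smax_le_one v' k₀
      nlinarith
    exact le_trans (ciInf_le (bdd_below_condC p c hp0 hp1 hc) v') hcond
  by_contra hcon
  push_neg at hcon
  have := hstep (((⨅ v' : Fin (n + 1) → ℝ, condC (fun t => 1 - t) p c v') - (1 - M)) / 2)
    (by linarith)
  linarith

end Main

/-- conditional regret bound for Ψ(t) = 1 − t with arbitrary costs
(key inequality in the proof of Theorem 4.3): for every score vector h, costs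
c ∈ [0,1]^[n], and maximizer k of h, ΔC_Ψ(h) ≥ ΔC_def(h)/(n+1). -/
theorem condRegret_bound_one_sub {n : ℕ} (hn : 2 ≤ n) (p c : Fin n → ℝ)
    (hp0 : ∀ y, 0 ≤ p y) (hp1 : ∑ y : Fin n, p y = 1)
    (hc : ∀ y, c y ∈ Set.Icc (0 : ℝ) 1)
    (v : Fin (n + 1) → ℝ) (k : Fin (n + 1)) (hk : ∀ j, v j ≤ v k) :
    condRegret (fun t => 1 - t) p c v ≥ defRegret p c k / (n + 1) := by
  have hn0 : 0 < n := by omega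
  obtain ⟨k₀, hk₀, hdom⟩ := exists_Pfull_max hn0 p c
  set M : ℝ := max (⨆ y : Fin n, p y) (∑ y : Fin n, p y * (1 - c y)) with hMdef
  have hinf := iInf_condC_le hn0 p c hp0 hp1 hc
  have hMk : Pfull p c k ≤ M := hk₀ ▸ hdom k
  -- softmax at k is at least 1/(n+1)
  have hs_k : 1 / ((n : ℝ) + 1) ≤ smax v k := by
    have := smax_ge v k hk
    push_cast at this
    exact this
  have hs_pos : ∀ j, 0 ≤ smax v j := fun j => (smax_pos v j).le
  -- split the sum
  have hsplit : ∑ j : Fin (n + 1), Pfull p c j * smax v j ≤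
      Pfull p c k * smax v k + M * (1 - smax v k) := by
    rw [← Finset.add_sum_erase _ _ (Finset.mem_univ k)]
    have h2 : ∑ j ∈ Finset.univ.erase k, smax v j = 1 - smax v k := by
      have := Finset.add_sum_erase Finset.univ (smax v) (Finset.mem_univ k)
      have hsum := smax_sum v
      linarith
    have h1 : ∑ j ∈ Finset.univ.erase k, Pfull p c j * smax v j ≤
        M * (1 - smax v k) := by
      rw [← h2, Finset.mul_sum]
      exact Finset.sum_le_sum fun j _ =>
        mul_le_mul_of_nonneg_right (hk₀ ▸ hdom j) (hs_pos j)
    linarith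
  have hcv : condC (fun t => 1 - t) p c v
      = 1 - ∑ j : Fin (n + 1), Pfull p c j * smax v j := condC_eq p c hp1 v
  have hmul : (M - Pfull p c k) / ((n : ℝ) + 1) ≤ (M - Pfull p c k) * smax v k := by
    calc (M - Pfull p c k) / ((n : ℝ) + 1) = (M - Pfull p c k) * (1 / ((n : ℝ) + 1)) := by
          ring
    _ ≤ (M - Pfull p c k) * smax v k :=
        mul_le_mul_of_nonneg_left hs_k (by linarith)
  have hexpand : (M - Pfull p c k) * smax v k
      = M * smax v k - Pfull p c k * smax v k := by ring
  rw [ge_iff_le, condRegret, defRegret, hcv]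
  linarith
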